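/- Let 1/2 < δ < 1, set ρ := 2 - 1/δ, and let 0 < α < 1/2 and c ≥ 0. Let k, N : ℕ → ℕ satisfy k(d) < d < N(d), d/N(d) → δ, k(d)/d → ρ, and |N(d) - 2d + k(d)| ≤ c·d^α for all sufficiently large d. Then Q_{d,k(d)}(N(d)) → 1/2 as d → ∞. -/

import Mathlib

open Filter Finset Real Topology


lemma aux_choose_le_two_pow (n j : ℕ) : (n.choose j : ℝ) ≤ 2 ^ n := by
  rcases le_or_gt j n with h | h
  · have : n.choose j ≤ 2 ^ n := by
      rw [← Nat.sum_range_choose n]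
      exact Finset.single_le_sum (f := fun i => n.choose i) (fun i _ => Nat.zero_le _)
        (Finset.mem_range.2 (Nat.lt_succ_of_le h))
    exact_mod_cast this
  · rw [Nat.choose_eq_zero_of_lt h]; norm_num

lemma aux_centralBinom_le (n : ℕ) :
    (Nat.centralBinom n : ℝ) * Real.sqrt (n + 1) ≤ 4 ^ n := by
  induction n with
  | zero => simp [Nat.centralBinom]
  | succ n ih =>
    set a : ℝ := (Nat.centralBinom n : ℝ) with ha
    set b : ℝ := (Nat.centralBinom (n+1) : ℝ) with hb
    have ha0 : 0 ≤ a := by positivity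
    have key : ((n:ℝ)+1) * b = 2 * (2*(n:ℝ)+1) * a := by
      have := Nat.succ_mul_centralBinom_succ n
      have := congrArg (Nat.cast : ℕ → ℝ) this
      push_cast at this
      linarith [this]
    set s : ℝ := Real.sqrt ((n:ℝ) + 1) with hs
    set t : ℝ := Real.sqrt ((n:ℝ) + 2) with ht
    have W : (2*(n:ℝ)+1) * t ≤ 2*((n:ℝ)+1) * s := by
      have w1 : (2*(n:ℝ)+1) * t = Real.sqrt ((2*(n:ℝ)+1)^2 * ((n:ℝ)+2)) := by
        rw [Real.sqrt_mul (sq_nonneg _), Real.sqrt_sq (by positivity)]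
      have w2 : 2*((n:ℝ)+1) * s = Real.sqrt ((2*((n:ℝ)+1))^2 * ((n:ℝ)+1)) := by
        rw [Real.sqrt_mul (sq_nonneg _), Real.sqrt_sq (by positivity)]
      rw [w1, w2]
      apply Real.sqrt_le_sqrt
      nlinarith [(n.cast_nonneg : (0:ℝ) ≤ n)]
    have h1 : ((n:ℝ)+1) * (b * t) = 2*a*((2*(n:ℝ)+1) * t) := by
      have : ((n:ℝ)+1) * (b * t) = (((n:ℝ)+1) * b) * t := by ring
      rw [this, key]; ring
    have h3 : 2*a*((2*(n:ℝ)+1) * t) ≤ 2*a*(2*((n:ℝ)+1) * s) :=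
      mul_le_mul_of_nonneg_left W (by positivity)
    have h5 : 4*((n:ℝ)+1)*(a*s) ≤ 4*((n:ℝ)+1)*(4^n) := by
      apply mul_le_mul_of_nonneg_left _ (by positivity)
      exact ih
    have hfin : ((n:ℝ)+1) * (b * t) ≤ ((n:ℝ)+1) * 4^(n+1) := by
      calc ((n:ℝ)+1) * (b * t) ≤ 2*a*(2*((n:ℝ)+1) * s) := by rw [h1]; exact h3
        _ = 4*((n:ℝ)+1)*(a*s) := by ring
        _ ≤ 4*((n:ℝ)+1)*(4^n) := h5
        _ = ((n:ℝ)+1) * 4^(n+1) := by ring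
    have hbt : b * t ≤ 4^(n+1) := le_of_mul_le_mul_left hfin (by positivity)
    have hcast : ((n+1:ℕ):ℝ) + 1 = (n:ℝ) + 2 := by push_cast; ring
    rw [hcast]
    exact hbt
lemma aux_mid (M : ℕ) : (M.choose (M/2) : ℝ) * Real.sqrt (M + 1) ≤ 2 ^ (M+1) := by
  rcases Nat.even_or_odd M with ⟨n, rfl⟩ | ⟨n, rfl⟩
  · -- M = n + n
    have hM2 : (n + n) / 2 = n := by omega
    rw [hM2]
    have hcb : ((n+n).choose n : ℝ) = Nat.centralBinom n := by
      rw [Nat.centralBinom_eq_two_mul_choose]; norm_num [two_mul]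
    rw [hcb]
    have hsq : Real.sqrt ((n:ℝ) + n + 1) ≤ 2 * Real.sqrt ((n:ℝ) + 1) := by
      rw [show (2:ℝ) * Real.sqrt ((n:ℝ)+1) = Real.sqrt (4 * ((n:ℝ)+1)) by
        rw [show (4:ℝ) = 2^2 by norm_num, Real.sqrt_mul (by positivity), Real.sqrt_sq (by norm_num)]]
      apply Real.sqrt_le_sqrt; push_cast; linarith [(n.cast_nonneg : (0:ℝ) ≤ n)]
    have h1 : (Nat.centralBinom n : ℝ) * Real.sqrt ((n:ℝ)+n+1)
        ≤ (Nat.centralBinom n : ℝ) * (2 * Real.sqrt ((n:ℝ)+1)) :=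
      mul_le_mul_of_nonneg_left hsq (by positivity)
    have h2 := aux_centralBinom_le n
    have : ((n:ℕ)+(n:ℕ):ℕ) = n + n := rfl
    push_cast
    calc (Nat.centralBinom n : ℝ) * Real.sqrt ((n:ℝ)+n+1)
        ≤ (Nat.centralBinom n : ℝ) * (2 * Real.sqrt ((n:ℝ)+1)) := h1
      _ = 2 * ((Nat.centralBinom n : ℝ) * Real.sqrt ((n:ℝ)+1)) := by ring
      _ ≤ 2 * 4^n := by linarith [h2]
      _ = 2^(n+n+1) := by rw [show (4:ℝ) = 2^2 by norm_num, ← pow_mul]; ring_nf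
  · -- M = 2n+1
    have hM2 : (2*n + 1) / 2 = n := by omega
    rw [hM2]
    have hdouble : ((2*n+1).choose n : ℝ) * 2 = Nat.centralBinom (n+1) := by
      have h1 : (2*n+2).choose (n+1) = (2*n+1).choose n + (2*n+1).choose (n+1) :=
        Nat.choose_succ_succ' (2*n+1) n
      have h2 : (2*n+1).choose (n+1) = (2*n+1).choose n := Nat.choose_symm_half n
      have h3 : Nat.centralBinom (n+1) = (2*n+2).choose (n+1) := by
        rw [Nat.centralBinom_eq_two_mul_choose]; congr 1
      rw [h3, h1, h2]; push_cast; ring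
    have hsq : Real.sqrt (2*(n:ℝ)+1+1) ≤ 2 * Real.sqrt ((n:ℝ)+2) := by
      rw [show (2:ℝ) * Real.sqrt ((n:ℝ)+2) = Real.sqrt (4 * ((n:ℝ)+2)) by
        rw [show (4:ℝ) = 2^2 by norm_num, Real.sqrt_mul (by positivity), Real.sqrt_sq (by norm_num)]]
      apply Real.sqrt_le_sqrt; linarith [(n.cast_nonneg : (0:ℝ) ≤ n)]
    have h2 := aux_centralBinom_le (n+1)
    have hc2 : ((n+1:ℕ):ℝ) + 1 = (n:ℝ) + 2 := by push_cast; ring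
    rw [hc2] at h2
    push_cast
    calc ((2*n+1).choose n : ℝ) * Real.sqrt (2*(n:ℝ)+1+1)
        ≤ ((2*n+1).choose n : ℝ) * (2 * Real.sqrt ((n:ℝ)+2)) :=
          mul_le_mul_of_nonneg_left hsq (by positivity)
      _ = ((2*n+1).choose n : ℝ) * 2 * Real.sqrt ((n:ℝ)+2) := by ring
      _ = (Nat.centralBinom (n+1) : ℝ) * Real.sqrt ((n:ℝ)+2) := by rw [hdouble]
      _ ≤ 4^(n+1) := h2
      _ = 2^(2*n+1+1) := by rw [show (4:ℝ) = 2^2 by norm_num, ← pow_mul]; ring_nf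
lemma aux_sumdiff (M a b : ℕ) :
    |∑ i ∈ range b, (M.choose i : ℝ) - ∑ i ∈ range a, (M.choose i : ℝ)|
      ≤ |(b:ℝ) - a| * (M.choose (M/2)) := by
  have key : ∀ x y : ℕ, x ≤ y →
      |∑ i ∈ range y, (M.choose i : ℝ) - ∑ i ∈ range x, (M.choose i : ℝ)|
        ≤ |(y:ℝ) - x| * (M.choose (M/2)) := by
    intro x y hxy
    rw [← Finset.sum_Ico_eq_sub (fun i => (M.choose i : ℝ)) hxy]
    have h1 : |∑ i ∈ Finset.Ico x y, (M.choose i : ℝ)| = ∑ i ∈ Finset.Ico x y, (M.choose i : ℝ) :=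
      abs_of_nonneg (Finset.sum_nonneg fun i _ => by positivity)
    rw [h1]
    have h2 : ∑ i ∈ Finset.Ico x y, (M.choose i : ℝ)
        ≤ (Finset.Ico x y).card • (M.choose (M/2) : ℝ) :=
      Finset.sum_le_card_nsmul _ _ _ (fun i _ => by exact_mod_cast Nat.choose_le_middle i M)
    rw [Nat.card_Ico, nsmul_eq_mul] at h2
    have h3 : ((y - x : ℕ) : ℝ) = |(y:ℝ) - x| := by
      rw [Nat.cast_sub hxy, abs_of_nonneg (sub_nonneg.2 (by exact_mod_cast hxy))]
    rw [← h3]; exact h2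
  rcases le_total a b with h | h
  · exact key a b h
  · rw [abs_sub_comm, abs_sub_comm (b:ℝ)]; exact key b a h

lemma aux_reflect (n p : ℕ) (h : p ≤ n + 1) :
    2 ^ n = ∑ i ∈ range p, n.choose i + ∑ i ∈ range (n + 1 - p), n.choose i := by
  have hinner : ∑ i ∈ Finset.Ico p (n+1), n.choose i = ∑ i ∈ range (n + 1 - p), n.choose i := by
    rw [Finset.sum_Ico_eq_sum_range]
    have hL : ∀ j ∈ range (n + 1 - p), n.choose (p + j) = n.choose (n + 1 - p - 1 - j) := by
      intro j hj
      rw [Finset.mem_range] at hj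
      have h1 : p + j ≤ n := by omega
      have h2 : n + 1 - p - 1 - j = n - (p + j) := by omega
      rw [h2, Nat.choose_symm h1]
    rw [Finset.sum_congr rfl hL, Finset.sum_range_reflect (fun i => n.choose i) (n + 1 - p)]
  rw [← Nat.sum_range_choose n, Finset.range_eq_Ico,
    ← Finset.sum_Ico_consecutive (fun i => n.choose i) (Nat.zero_le p) h,
    ← Finset.range_eq_Ico, hinner]

lemma aux_half (M p : ℕ) (h : p ≤ M + 1) :
    |2 * ∑ i ∈ range p, (M.choose i : ℝ) - 2 ^ M|
      ≤ |2 * (p:ℝ) - ((M:ℝ) + 1)| * (M.choose (M/2)) := by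
  have hr := aux_reflect M p h
  have hr' : (2:ℝ) ^ M = ∑ i ∈ range p, (M.choose i : ℝ)
      + ∑ i ∈ range (M + 1 - p), (M.choose i : ℝ) := by exact_mod_cast hr
  have heq : 2 * ∑ i ∈ range p, (M.choose i : ℝ) - 2 ^ M
      = ∑ i ∈ range p, (M.choose i : ℝ) - ∑ i ∈ range (M + 1 - p), (M.choose i : ℝ) := by
    rw [hr']; ring
  rw [heq]
  have := aux_sumdiff M (M + 1 - p) p
  have hcast : ((M + 1 - p : ℕ) : ℝ) = (M:ℝ) + 1 - p := by
    rw [Nat.cast_sub h]; push_cast; ring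
  have habs : |(p:ℝ) - ((M + 1 - p : ℕ) : ℝ)| = |2 * (p:ℝ) - ((M:ℝ) + 1)| := by
    rw [hcast]; congr 1; ring
  rw [habs] at this
  exact this
lemma aux_geo (n j : ℕ) (hj : j ≤ n) : ∀ t i, i + t = j →
    (n.choose i : ℝ) ≤ n.choose j * ((j:ℝ)/((n:ℝ) - j + 1))^t := by
  have hden : (0:ℝ) < (n:ℝ) - j + 1 := by
    have : (j:ℝ) ≤ n := by exact_mod_cast hj
    linarith
  have hq0 : 0 ≤ (j:ℝ)/((n:ℝ) - j + 1) := div_nonneg (by positivity) hden.le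
  intro t
  induction t with
  | zero => intro i hi; simp [show i = j by omega]
  | succ t ih =>
    intro i hi
    have h1 := ih (i+1) (by omega)
    have hin : i < n := by omega
    have hinR : (i:ℝ) < n := by exact_mod_cast hin
    have hpos : (0:ℝ) < (n:ℝ) - i := by linarith
    have key : (n.choose (i+1) : ℝ) * ((i:ℝ)+1) = n.choose i * ((n:ℝ) - i) := by
      have h := Nat.choose_succ_right_eq n i
      have hcast := congrArg (Nat.cast : ℕ → ℝ) h
      push_cast [Nat.cast_sub hin.le] at hcast
      linarith [hcast]
    have hci : (n.choose i : ℝ) = n.choose (i+1) * (((i:ℝ)+1)/((n:ℝ) - i)) := by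
      field_simp
      linarith [key]
    have hij1 : (i:ℝ) + 1 ≤ j := by exact_mod_cast (by omega : i + 1 ≤ j)
    have hjn : (j:ℝ) ≤ n := by exact_mod_cast hj
    have hq : ((i:ℝ)+1)/((n:ℝ) - i) ≤ (j:ℝ)/((n:ℝ) - j + 1) := by
      rw [div_le_div_iff₀ hpos hden]
      nlinarith
    calc (n.choose i : ℝ) = n.choose (i+1) * (((i:ℝ)+1)/((n:ℝ) - i)) := hci
      _ ≤ n.choose (i+1) * ((j:ℝ)/((n:ℝ) - j + 1)) :=
          mul_le_mul_of_nonneg_left hq (by positivity)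
      _ ≤ (n.choose j * ((j:ℝ)/((n:ℝ) - j + 1))^t) * ((j:ℝ)/((n:ℝ) - j + 1)) :=
          mul_le_mul_of_nonneg_right h1 hq0
      _ = n.choose j * ((j:ℝ)/((n:ℝ) - j + 1))^(t+1) := by ring

lemma aux_tail (n m j : ℕ) (hmj : m ≤ j) (hjn : j ≤ n)
    (hq : (j:ℝ)/((n:ℝ) - j + 1) < 1) :
    ∑ i ∈ range (m+1), (n.choose i : ℝ)
      ≤ 2^n * ((j:ℝ)/((n:ℝ) - j + 1))^(j-m) / (1 - (j:ℝ)/((n:ℝ) - j + 1)) := by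
  set q : ℝ := (j:ℝ)/((n:ℝ) - j + 1) with hqdef
  have hden : (0:ℝ) < (n:ℝ) - j + 1 := by
    have : (j:ℝ) ≤ n := by exact_mod_cast hjn
    linarith
  have hq0 : 0 ≤ q := div_nonneg (by positivity) hden.le
  have h1q : 0 < 1 - q := by linarith
  have bound : ∀ i ∈ range (m+1), (n.choose i : ℝ) ≤ 2^n * q^(j-m) * q^(m-i) := by
    intro i hi
    rw [Finset.mem_range] at hi
    have him : i ≤ m := by omega
    have ht : i + (j - i) = j := by omega
    have := aux_geo n j hjn (j - i) i ht
    have hsplit : q^(j-i) = q^(j-m) * q^(m-i) := by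
      rw [← pow_add]; congr 1; omega
    calc (n.choose i : ℝ) ≤ n.choose j * q^(j-i) := this
      _ ≤ 2^n * q^(j-i) := mul_le_mul_of_nonneg_right (aux_choose_le_two_pow n j) (by positivity)
      _ = 2^n * q^(j-m) * q^(m-i) := by rw [hsplit]; ring
  have hsum : ∑ i ∈ range (m+1), (n.choose i : ℝ)
      ≤ ∑ i ∈ range (m+1), 2^n * q^(j-m) * q^(m-i) := Finset.sum_le_sum bound
  have hre : ∑ i ∈ range (m+1), 2^n * q^(j-m) * q^(m-i)
      = 2^n * q^(j-m) * ∑ i ∈ range (m+1), q^i := by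
    rw [← Finset.mul_sum]
    congr 1
    rw [← Finset.sum_range_reflect (fun i => q^i) (m+1)]
    apply Finset.sum_congr rfl
    intro i hi
    norm_num
  have hgeom : ∑ i ∈ range (m+1), q^i ≤ 1/(1-q) := by
    rw [geom_sum_eq (ne_of_lt hq)]
    have heq : (q^(m+1) - 1)/(q - 1) = (1 - q^(m+1))/(1 - q) := by
      rw [← neg_div_neg_eq]; ring_nf
    rw [heq, div_le_div_iff₀ h1q h1q]
    nlinarith [pow_nonneg hq0 (m+1)]
  calc ∑ i ∈ range (m+1), (n.choose i : ℝ) ≤ 2^n * q^(j-m) * ∑ i ∈ range (m+1), q^i := by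
        rw [← hre]; exact hsum
    _ ≤ 2^n * q^(j-m) * (1/(1-q)) := mul_le_mul_of_nonneg_left hgeom (by positivity)
    _ = 2^n * q^(j-m) / (1-q) := by ring
set_option maxHeartbeats 1000000 in
lemma aux_partA (ρ c α : ℝ) (hρ1 : ρ < 1) (hc : 0 ≤ c) (hα2 : α < 1/2)
    (k N : ℕ → ℕ) (hkN : ∀ᶠ d : ℕ in atTop, k d < d ∧ d < N d)
    (hkhi : ∀ᶠ d : ℕ in atTop, (k d : ℝ) ≤ (ρ + (1-ρ)/8) * d)
    (h3 : ∀ᶠ d : ℕ in atTop, |(N d : ℝ) - 2 * d + k d| ≤ c * (d : ℝ) ^ α) :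
    Tendsto (fun d : ℕ => (∑ i ∈ Finset.range (d - k d), ((N d - k d - 1).choose i : ℝ))
      / 2 ^ (N d - k d - 1)) atTop (𝓝 (1/2)) := by
  have hrpow : Tendsto (fun d : ℕ => (d:ℝ)^(α - 1/2)) atTop (𝓝 0) := by
    have := (tendsto_rpow_neg_atTop (show 0 < -(α - 1/2) by linarith)).comp
      (tendsto_natCast_atTop_atTop (R := ℝ))
    simpa [Function.comp_def] using this
  have hsqc : (0:ℝ) < Real.sqrt ((1-ρ)/2) := Real.sqrt_pos.2 (by linarith)
  have hB2 : Tendsto (fun d : ℕ => c * (d:ℝ)^α / Real.sqrt ((1-ρ)/2 * d)) atTop (𝓝 0) := by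
    have hmain : Tendsto (fun d : ℕ => (c / Real.sqrt ((1-ρ)/2)) * (d:ℝ)^(α - 1/2))
        atTop (𝓝 0) := by
      have := hrpow.const_mul (c / Real.sqrt ((1-ρ)/2))
      simpa using this
    apply hmain.congr'
    filter_upwards [eventually_ge_atTop 1] with d hd
    have hd0 : (0:ℝ) < d := by exact_mod_cast hd
    rw [Real.sqrt_mul (by linarith : (0:ℝ) ≤ (1-ρ)/2), Real.sqrt_eq_rpow (d:ℝ),
      Real.rpow_sub hd0]
    have hrp : (0:ℝ) < (d:ℝ) ^ (1/(2:ℝ)) := Real.rpow_pos_of_pos hd0 _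
    field_simp
  have hbound : ∀ᶠ d : ℕ in atTop,
      |(∑ i ∈ Finset.range (d - k d), ((N d - k d - 1).choose i : ℝ)) / 2 ^ (N d - k d - 1)
        - 1/2| ≤ c * (d:ℝ)^α / Real.sqrt ((1-ρ)/2 * d) := by
    filter_upwards [hkN, h3, hkhi, eventually_ge_atTop 1] with d hkn h3d hkhid hd1
    obtain ⟨hkd, hdN⟩ := hkn
    have hd0 : (0:ℝ) < d := by exact_mod_cast hd1
    obtain ⟨M, hMdef⟩ : ∃ M', N d - k d - 1 = M' := ⟨_, rfl⟩
    obtain ⟨p, hpdef⟩ : ∃ p', d - k d = p' := ⟨_, rfl⟩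
    rw [hMdef, hpdef]
    have hpM : p ≤ M + 1 := by omega
    have key := aux_half M p hpM
    have hMcast : ((M:ℕ):ℝ) = (N d:ℝ) - (k d:ℝ) - 1 := by
      rw [show M = N d - (k d + 1) from by omega, Nat.cast_sub (by omega)]
      push_cast; ring
    have hpcast : ((p:ℕ):ℝ) = (d:ℝ) - (k d:ℝ) := by
      rw [← hpdef, Nat.cast_sub hkd.le]
    have habs : |2 * ((p:ℕ):ℝ) - (((M:ℕ):ℝ) + 1)| = |(N d:ℝ) - 2*(d:ℝ) + (k d:ℝ)| := by
      rw [hpcast, hMcast, ← abs_neg]; congr 1; ring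
    rw [habs] at key
    have hs0 : (0:ℝ) < Real.sqrt ((M:ℝ)+1) := Real.sqrt_pos.2 (by positivity)
    have hmid : (M.choose (M/2) : ℝ) ≤ 2^(M+1)/Real.sqrt ((M:ℝ)+1) := by
      rw [le_div_iff₀ hs0]; exact aux_mid M
    have hMlb : (1-ρ)/2 * d ≤ (M:ℝ) + 1 := by
      rw [hMcast]
      have h1' : (d:ℝ) + 1 ≤ N d := by exact_mod_cast hdN
      nlinarith
    obtain ⟨S, hSdef⟩ : ∃ S', (∑ i ∈ Finset.range p, ((M).choose i : ℝ)) = S' := ⟨_, rfl⟩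
    rw [hSdef]
    rw [hSdef] at key
    have h2M : (0:ℝ) < 2^M := by positivity
    have heq : S / 2^M - 1/2 = (2*S - 2^M)/(2*2^M) := by field_simp
    rw [heq, abs_div, abs_of_pos (show (0:ℝ) < 2*2^M by positivity)]
    have hnum : |2*S - 2^M| ≤ (c*(d:ℝ)^α) * (2^(M+1)/Real.sqrt ((M:ℝ)+1)) := by
      calc |2*S - 2^M| ≤ |(N d:ℝ) - 2*(d:ℝ) + (k d:ℝ)| * (M.choose (M/2) : ℝ) := key
        _ ≤ (c*(d:ℝ)^α) * (2^(M+1)/Real.sqrt ((M:ℝ)+1)) := by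
            apply mul_le_mul h3d hmid (by positivity) (by positivity)
    calc |2*S - 2^M|/(2*2^M) ≤ ((c*(d:ℝ)^α) * (2^(M+1)/Real.sqrt ((M:ℝ)+1)))/(2*2^M) :=
          (div_le_div_iff_of_pos_right (by positivity)).2 hnum
      _ = c*(d:ℝ)^α / Real.sqrt ((M:ℝ)+1) := by
          rw [pow_succ]
          field_simp [hs0.ne']
      _ ≤ c*(d:ℝ)^α / Real.sqrt ((1-ρ)/2*(d:ℝ)) := by
          gcongr <;>
            first
              | exact Real.sqrt_pos.2 (mul_pos (by linarith) hd0)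
              | exact Real.sqrt_le_sqrt hMlb
  have h0 : Tendsto (fun d : ℕ =>
      (∑ i ∈ Finset.range (d - k d), ((N d - k d - 1).choose i : ℝ)) / 2 ^ (N d - k d - 1)
        - 1/2) atTop (𝓝 0) := by
    apply tendsto_of_tendsto_of_tendsto_of_le_of_le' (g := fun d : ℕ =>
        -(c * (d:ℝ)^α / Real.sqrt ((1-ρ)/2 * d))) (by simpa using hB2.neg) hB2
    · exact hbound.mono fun d h => (abs_le.1 h).1
    · exact hbound.mono fun d h => (abs_le.1 h).2
  have := h0.add_const (1/2)
  simpa using this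
set_option maxHeartbeats 1000000 in
lemma aux_partB (ρ : ℝ) (hρ0 : 0 < ρ) (hρ1 : ρ < 1)
    (k N : ℕ → ℕ) (hkN : ∀ᶠ d : ℕ in atTop, k d < d ∧ d < N d)
    (hklo : ∀ᶠ d : ℕ in atTop, (ρ - ρ/8) * d ≤ (k d : ℝ))
    (heps : ∀ᶠ d : ℕ in atTop, |(N d : ℝ) - 2 * d + k d| ≤ ρ/8 * d)
    (hN2d : ∀ᶠ d : ℕ in atTop, (N d : ℝ) ≤ 2 * d) :
    Tendsto (fun d : ℕ => (∑ i ∈ Finset.range d, ((N d - 1).choose i : ℝ)) / 2 ^ (N d - 1))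
      atTop (𝓝 1) := by
  set γ : ℝ := ρ/48 with hγdef
  have hγ0 : 0 < γ := by positivity
  have hγ1 : γ < 1 := by rw [hγdef]; linarith
  set s : ℕ → ℕ := fun d => ⌈ρ/4 * d⌉₊ with hsdef
  have hsTop : Tendsto s atTop atTop := by
    rw [← tendsto_natCast_atTop_iff (R := ℝ)]
    have hbase : Tendsto (fun d : ℕ => ρ/4 * (d:ℝ)) atTop atTop :=
      Tendsto.const_mul_atTop (by positivity) tendsto_natCast_atTop_atTop
    exact tendsto_atTop_mono (fun d : ℕ => Nat.le_ceil (ρ/4 * (d:ℝ))) hbase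
  have hB1 : Tendsto (fun d => (1-γ)^(s d) / γ) atTop (𝓝 0) := by
    have h := (tendsto_pow_atTop_nhds_zero_of_lt_one (r := 1-γ) (by linarith)
      (by linarith)).comp hsTop
    simpa using h.div_const γ
  have hd32 : ∀ᶠ d : ℕ in atTop, (32:ℝ)/ρ ≤ (d:ℝ) :=
    (tendsto_natCast_atTop_atTop (R := ℝ)).eventually_ge_atTop (32/ρ)
  have hbound : ∀ᶠ d : ℕ in atTop,
      |1 - (∑ i ∈ Finset.range d, ((N d - 1).choose i : ℝ)) / 2 ^ (N d - 1)|
        ≤ (1-γ)^(s d) / γ := by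
    filter_upwards [hkN, hklo, heps, hN2d, hd32, eventually_ge_atTop 1]
      with d hkn hklod hepsd hN2dd hd32d hd1
    obtain ⟨hkd, hdN⟩ := hkn
    have hd0 : (0:ℝ) < d := by exact_mod_cast hd1
    have hd32' : (32:ℝ) ≤ (d:ℝ) * ρ := (div_le_iff₀ hρ0).1 hd32d
    -- names
    obtain ⟨n, hndef⟩ : ∃ n', N d - 1 = n' := ⟨_, rfl⟩
    rw [hndef]
    obtain ⟨mm, hmdef⟩ : ∃ m', n - d = m' := ⟨_, rfl⟩
    have hdn : d ≤ n := by omega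
    have hncast : ((n:ℕ):ℝ) = (N d:ℝ) - 1 := by
      rw [← hndef, Nat.cast_sub (by omega)]; push_cast; ring
    have hmcast : ((mm:ℕ):ℝ) = (N d:ℝ) - 1 - d := by
      rw [← hmdef, Nat.cast_sub hdn, hncast]
    have hscast1 : ρ/4 * (d:ℝ) ≤ (s d : ℝ) := Nat.le_ceil _
    have hscast2 : (s d : ℝ) < ρ/4 * (d:ℝ) + 1 := Nat.ceil_lt_add_one (by positivity)
    have hepsd' : (2:ℝ)*d - N d ≥ (k d:ℝ) - ρ/8 * d := by
      have := (abs_le.1 hepsd).2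
      linarith
    -- the index jj
    obtain ⟨jj, hjdef⟩ : ∃ j', mm + s d = j' := ⟨_, rfl⟩
    have hjcast : ((jj:ℕ):ℝ) = ((N d:ℝ) - 1 - d) + (s d : ℝ) := by
      rw [← hjdef]; push_cast; rw [hmcast]
    have hgap : ρ/16 * d + 1 ≤ (n:ℝ) - 2*(jj:ℝ) := by
      rw [hjcast, hncast]
      nlinarith
    have hjn : jj ≤ n := by
      have h1' : (jj:ℝ) ≤ (n:ℝ) := by
        have : (0:ℝ) ≤ jj := by positivity
        nlinarith
      exact_mod_cast h1'
    have hden : (0:ℝ) < (n:ℝ) - jj + 1 := by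
      have : (jj:ℝ) ≤ (n:ℝ) := by exact_mod_cast hjn
      linarith
    set q : ℝ := (jj:ℝ)/((n:ℝ) - jj + 1) with hqdef
    have hq0 : 0 ≤ q := div_nonneg (by positivity) hden.le
    have h1mq : 1 - q = ((n:ℝ) - 2*jj + 1)/((n:ℝ) - jj + 1) := by
      rw [hqdef]; field_simp; ring
    have hγle : γ ≤ 1 - q := by
      rw [h1mq, le_div_iff₀ hden]
      have hup : (n:ℝ) - jj + 1 ≤ 2*d := by
        have : (0:ℝ) ≤ jj := by positivity
        rw [hncast]; linarith
      calc γ * ((n:ℝ) - jj + 1) ≤ γ * (2*d) :=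
            mul_le_mul_of_nonneg_left hup hγ0.le
        _ = ρ/24 * d := by rw [hγdef]; ring
        _ ≤ (n:ℝ) - 2*jj + 1 := by nlinarith
    have hq1 : q < 1 := by linarith
    have htail := aux_tail n mm jj (by omega) hjn hq1
    rw [← hqdef] at htail
    have hjm : jj - mm = s d := by omega
    rw [hjm] at htail
    -- reflection identity
    have hrefl := aux_reflect n d (by omega)
    have hrefl' : (2:ℝ)^n = (∑ i ∈ Finset.range d, (n.choose i : ℝ))
        + ∑ i ∈ Finset.range (mm+1), (n.choose i : ℝ) := by
      have hnm : n + 1 - d = mm + 1 := by omega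
      rw [hnm] at hrefl
      exact_mod_cast hrefl
    have h2n : (0:ℝ) < 2^n := by positivity
    have heq1 : 1 - (∑ i ∈ Finset.range d, (n.choose i : ℝ)) / 2^n
        = (∑ i ∈ Finset.range (mm+1), (n.choose i : ℝ)) / 2^n := by
      rw [eq_div_iff h2n.ne']
      rw [sub_mul, one_mul, div_mul_cancel₀ _ h2n.ne']
      linarith [hrefl']
    rw [heq1, abs_of_nonneg (by positivity)]
    calc (∑ i ∈ Finset.range (mm+1), (n.choose i : ℝ)) / 2^n
        ≤ (2^n * q^(s d) / (1 - q)) / 2^n := (div_le_div_iff_of_pos_right h2n).2 htail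
      _ = q^(s d) / (1-q) := by rw [mul_div_assoc, mul_div_cancel_left₀ _ h2n.ne']
      _ ≤ (1-γ)^(s d) / γ := by
          have h1 : q^(s d) ≤ (1-γ)^(s d) := pow_le_pow_left₀ hq0 (by linarith) _
          have h2 : 1/(1-q) ≤ 1/γ := one_div_le_one_div_of_le hγ0 hγle
          calc q^(s d)/(1-q) = q^(s d) * (1/(1-q)) := by ring
            _ ≤ (1-γ)^(s d) * (1/γ) := by
                apply mul_le_mul h1 h2 (one_div_nonneg.2 (by linarith)) (pow_nonneg (by linarith) _)
            _ = (1-γ)^(s d) / γ := by ring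
  have h0 : Tendsto (fun d : ℕ =>
      1 - (∑ i ∈ Finset.range d, ((N d - 1).choose i : ℝ)) / 2 ^ (N d - 1)) atTop (𝓝 0) := by
    apply tendsto_of_tendsto_of_tendsto_of_le_of_le' (g := fun d : ℕ => -((1-γ)^(s d) / γ))
      (by simpa using hB1.neg) hB1
    · exact hbound.mono fun d h => (abs_le.1 h).1
    · exact hbound.mono fun d h => (abs_le.1 h).2
  have := tendsto_const_nhds (x := (1:ℝ)) (f := atTop (α := ℕ)) |>.sub h0
  simpa using this

/-- `Q d k N = 2^k · (Σ_{i=0}^{d-k-1} C(N-k-1, i)) / (Σ_{i=0}^{d-1} C(N-1, i))`,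
the normalized expected `k`-face number `E f_k(C_N)/C(N,k)` of the Cover–Efron cone. -/
noncomputable def Q (d k N : ℕ) : ℝ :=
  2 ^ k * (∑ i ∈ Finset.range (d - k), ((N - k - 1).choose i : ℝ)) /
    (∑ i ∈ Finset.range d, ((N - 1).choose i : ℝ))

theorem Q_tendsto_half_subcritical (δ ρ c α : ℝ) (hδ : 1 / 2 < δ) (hδ1 : δ < 1)
    (hρ : ρ = 2 - 1 / δ) (hα1 : 0 < α) (hα2 : α < 1 / 2) (hc : 0 ≤ c)
    (k N : ℕ → ℕ) (hkN : ∀ᶠ d in atTop, k d < d ∧ d < N d)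
    (h1 : Tendsto (fun d : ℕ => (d : ℝ) / (N d : ℝ)) atTop (𝓝 δ))
    (h2 : Tendsto (fun d : ℕ => (k d : ℝ) / (d : ℝ)) atTop (𝓝 ρ))
    (h3 : ∀ᶠ d : ℕ in atTop, |(N d : ℝ) - 2 * d + k d| ≤ c * (d : ℝ) ^ α) :
    Tendsto (fun d : ℕ => Q d (k d) (N d)) atTop (𝓝 (1 / 2)) := by
  have hδ0 : (0:ℝ) < δ := by linarith
  have hρ0 : 0 < ρ := by
    have h : 1/δ < 2 := by rw [div_lt_iff₀ hδ0]; linarith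
    rw [hρ]; linarith
  have hρ1 : ρ < 1 := by
    have h : 1 < 1/δ := by rw [lt_div_iff₀ hδ0]; linarith
    rw [hρ]; linarith
  have hkhi : ∀ᶠ d : ℕ in atTop, (k d : ℝ) ≤ (ρ + (1-ρ)/8) * d := by
    filter_upwards [h2.eventually_lt_const (show ρ < ρ + (1-ρ)/8 by linarith),
      eventually_ge_atTop 1] with d hlt hd
    have hd0 : (0:ℝ) < d := by exact_mod_cast hd
    rw [div_lt_iff₀ hd0] at hlt
    linarith
  have hklo : ∀ᶠ d : ℕ in atTop, (ρ - ρ/8) * d ≤ (k d : ℝ) := by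
    filter_upwards [h2.eventually_const_lt (show ρ - ρ/8 < ρ by linarith),
      eventually_ge_atTop 1] with d hlt hd
    have hd0 : (0:ℝ) < d := by exact_mod_cast hd
    rw [lt_div_iff₀ hd0] at hlt
    linarith
  have hN2d : ∀ᶠ d : ℕ in atTop, (N d : ℝ) ≤ 2 * d := by
    filter_upwards [h1.eventually_const_lt hδ, hkN] with d hlt hkn
    have hN0 : (0:ℝ) < N d := by
      have h' : 0 < N d := by omega
      exact_mod_cast h'
    rw [lt_div_iff₀ hN0] at hlt
    linarith
  have hsmalllim : Tendsto (fun d : ℕ => c * (d:ℝ)^α / (d:ℝ)) atTop (𝓝 0) := by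
    have hmain : Tendsto (fun d : ℕ => c * (d:ℝ)^(α - 1)) atTop (𝓝 0) := by
      have h' := (tendsto_rpow_neg_atTop (show 0 < -(α - 1) by linarith)).comp
        (tendsto_natCast_atTop_atTop (R := ℝ))
      have := Tendsto.const_mul c (show Tendsto (fun d : ℕ => (d:ℝ)^(α-1)) atTop (𝓝 0) by
        simpa [Function.comp_def] using h')
      simpa using this
    apply hmain.congr'
    filter_upwards [eventually_ge_atTop 1] with d hd
    have hd0 : (0:ℝ) < d := by exact_mod_cast hd
    rw [Real.rpow_sub hd0, Real.rpow_one]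
    ring
  have heps : ∀ᶠ d : ℕ in atTop, |(N d:ℝ) - 2*(d:ℝ) + (k d:ℝ)| ≤ ρ/8 * d := by
    filter_upwards [h3, hsmalllim.eventually_lt_const (show (0:ℝ) < ρ/8 by positivity),
      eventually_ge_atTop 1] with d h3d hlt hd
    have hd0 : (0:ℝ) < d := by exact_mod_cast hd
    rw [div_lt_iff₀ hd0] at hlt
    linarith
  have hA := aux_partA ρ c α hρ1 hc hα2 k N hkN hkhi h3
  have hB := aux_partB ρ hρ0 hρ1 k N hkN hklo heps hN2d
  have hQeq : ∀ᶠ d : ℕ in atTop,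
      ((∑ i ∈ Finset.range (d - k d), ((N d - k d - 1).choose i : ℝ)) / 2 ^ (N d - k d - 1)) /
      ((∑ i ∈ Finset.range d, ((N d - 1).choose i : ℝ)) / 2 ^ (N d - 1))
        = Q d (k d) (N d) := by
    filter_upwards [hkN, eventually_ge_atTop 1] with d hkn hd1
    obtain ⟨hkd, hdN⟩ := hkn
    have hT0 : (0:ℝ) < ∑ i ∈ Finset.range d, ((N d - 1).choose i : ℝ) := by
      apply Finset.sum_pos' (fun i _ => by positivity)
      refine ⟨0, Finset.mem_range.2 (by omega), by norm_num⟩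
    have hpow : (2:ℝ)^(N d - 1) = 2^(k d) * 2^(N d - k d - 1) := by
      rw [← pow_add]; congr 1; omega
    rw [Q, hpow]
    have h2M : (0:ℝ) < 2^(N d - k d - 1) := by positivity
    field_simp
  exact Tendsto.congr' hQeq (by simpa [Pi.div_def] using hA.div hB one_ne_zero)
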